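/- arXiv:1809.10946 — 9 statements merged into one kernel-verified Lean document; each statement's English description precedes it below -/
import Mathlib

section
/- Assume P has at least two elements. Then there is no map Cn from subsets of L• to subsets of L• satisfying all of the following: (P1) Inclusion: for every K ⊆ L•, K ⊆ Cn(K); (P2) Cumulativity: for all K, K' ⊆ L•, if K ⊆ K' ⊆ Cn(K) then Cn(K') = Cn(K); (P3) Ampliativeness: for every K ⊆ L•, Cn0(K) ⊆ Cn(K); (P5) Conditional Rationality: for every K ⊆ L•, the induced conditional relation |~_{Cn(K)} is a rational conditional on L; (P8) Strict Entailment: for every K ⊆ L• and every α ∈ L, α ∈ Cn(K) iff α ∈ Cn0(K); (P10) Typical Entailment: for every K ⊆ L• and every α ∈ L, •⊤ → α ∈ Cn(K) iff •⊤ → α ∈ Cn0(K). -/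
attribute [local instance] Classical.propDecidable

universe u

/-- Sentences of Propositional Typicality Logic over atoms `P`. -/
inductive PTL (P : Type u) : Type u
  | atom : P → PTL P
  | neg  : PTL P → PTL P
  | conj : PTL P → PTL P → PTL P
  | top  : PTL P
  | bot  : PTL P
  | typ  : PTL P → PTL P

namespace PTL

/-- Material implication, defined from `¬` and `∧`. -/
def impl {P : Type u} (a b : PTL P) : PTL P := neg (conj a (neg b))

/-- Disjunction, defined from `¬` and `∧`. -/
def disj {P : Type u} (a b : PTL P) : PTL P := neg (conj (neg a) (neg b))

/-- Purely propositional sentences: no occurrence of the typicality operator. -/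
def IsProp {P : Type u} : PTL P → Prop
  | atom _ => True
  | neg a => IsProp a
  | conj a b => IsProp a ∧ IsProp b
  | top => True
  | bot => True
  | typ _ => False

end PTL

/-- Propositional valuations. -/
abbrev Val (P : Type u) := P → Bool

/-- Satisfaction of a PTL sentence by a valuation, relative to a ranking
function `rho : Val P → ℕ∞`. -/
def satR {P : Type u} (rho : Val P → ℕ∞) : Val P → PTL P → Prop
  | v, PTL.atom p => v p = true
  | v, PTL.neg a => ¬ satR rho v a
  | v, PTL.conj a b => satR rho v a ∧ satR rho v b
  | _, PTL.top => True
  | _, PTL.bot => False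
  | v, PTL.typ a => satR rho v a ∧ ∀ v', rho v' < rho v → ¬ satR rho v' a

/-- The convexity property of ranking functions. -/
def RkConvex {P : Type u} (rho : Val P → ℕ∞) : Prop :=
  ∀ (v : Val P) (i : ℕ), rho v = (i : ℕ∞) → ∀ j : ℕ, j < i → ∃ v', rho v' = (j : ℕ∞)

/-- A ranked interpretation: a convex ranking function on valuations. -/
structure RankedInterp (P : Type u) where
  rk : Val P → ℕ∞
  convex : RkConvex rk

/-- `rho` is a ranked model of `a`: every possible valuation satisfies `a`. -/
def modelsR {P : Type u} (rho : Val P → ℕ∞) (a : PTL P) : Prop :=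
  ∀ v, rho v < ⊤ → satR rho v a

/-- `R ⊨ a`. -/
def RankedInterp.models {P : Type u} (R : RankedInterp P) (a : PTL P) : Prop :=
  modelsR R.rk a

/-- `R` is a ranked model of the knowledge base `K`. -/
def modelsSet {P : Type u} (R : RankedInterp P) (K : Set (PTL P)) : Prop :=
  ∀ a ∈ K, R.models a

/-- Ranked entailment consequences of `K`. -/
def Cn0 {P : Type u} (K : Set (PTL P)) : Set (PTL P) :=
  {a | ∀ R : RankedInterp P, modelsSet R K → R.models a}

/-- Classical propositional satisfaction (intended for purely propositional
sentences; `•` is vacuously false). -/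
def psat {P : Type u} : Val P → PTL P → Prop
  | v, PTL.atom p => v p = true
  | v, PTL.neg a => ¬ psat v a
  | v, PTL.conj a b => psat v a ∧ psat v b
  | _, PTL.top => True
  | _, PTL.bot => False
  | _, PTL.typ _ => False

/-- Propositional tautology. -/
def Taut {P : Type u} (a : PTL P) : Prop := ∀ v : Val P, psat v a

/-- Biconditional. -/
def PTL.iffF {P : Type u} (a b : PTL P) : PTL P := PTL.conj (a.impl b) (b.impl a)

/-- Rational Monotonicity (RM) for a conditional relation on `L`. -/
def SatisfiesRM {P : Type u} (C : PTL P → PTL P → Prop) : Prop :=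
  ∀ a b c : PTL P, a.IsProp → b.IsProp → c.IsProp →
    C a c → ¬ C a (PTL.neg b) → C (PTL.conj a b) c

/-- A rational conditional on the purely propositional fragment `L`:
(Ref), (LLE), (And), (Or), (RW), (CM) and (RM). -/
def IsRationalConditional {P : Type u} (C : PTL P → PTL P → Prop) : Prop :=
  (∀ a : PTL P, a.IsProp → C a a) ∧
  (∀ a b c : PTL P, a.IsProp → b.IsProp → c.IsProp →
    Taut (PTL.iffF a b) → C a c → C b c) ∧
  (∀ a b c : PTL P, a.IsProp → b.IsProp → c.IsProp →
    C a b → C a c → C a (PTL.conj b c)) ∧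
  (∀ a b c : PTL P, a.IsProp → b.IsProp → c.IsProp →
    C a c → C b c → C (PTL.disj a b) c) ∧
  (∀ a b c : PTL P, a.IsProp → b.IsProp → c.IsProp →
    C a b → Taut (PTL.impl b c) → C a c) ∧
  (∀ a b c : PTL P, a.IsProp → b.IsProp → c.IsProp →
    C a b → C a c → C (PTL.conj a b) c) ∧
  SatisfiesRM C

/-- The conditional relation `|~_S` induced by a set `S` of PTL sentences. -/
def inducedCond {P : Type u} (S : Set (PTL P)) (a b : PTL P) : Prop :=
  a.IsProp ∧ b.IsProp ∧ PTL.impl (PTL.typ a) b ∈ S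


namespace PTLImpossible

variable {P : Type u}

lemma sat_impl (rho : Val P → ℕ∞) (v : Val P) (a b : PTL P) :
    satR rho v (PTL.impl a b) ↔ (satR rho v a → satR rho v b) := by
  simp only [PTL.impl, satR]; tauto

/-- The first axiom: `•⊤ → p`. -/
def sA (p : P) : PTL P := PTL.impl (PTL.typ PTL.top) (PTL.atom p)

/-- `⊤ ∧ q`. -/
def sQ (q : P) : PTL P := PTL.conj PTL.top (PTL.atom q)

/-- The second axiom: `(q ∧ ¬p) → •(⊤ ∧ q)`. -/
def sX (p q : P) : PTL P :=
  PTL.impl (PTL.conj (PTL.atom q) (PTL.neg (PTL.atom p))) (PTL.typ (sQ q))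

/-- The conditional derived via (RM): `•(⊤ ∧ q) → p`. -/
def sB (p q : P) : PTL P := PTL.impl (PTL.typ (sQ q)) (PTL.atom p)

/-- The extra propositional consequence: `q → p`. -/
def sD (p q : P) : PTL P := PTL.impl (PTL.atom q) (PTL.atom p)

/-- The knowledge base. -/
def KK (p q : P) : Set (PTL P) := {sA p, sX p q}

def v1 : Val P := fun _ => true
noncomputable def w0 (q : P) : Val P := fun r => if r = q then false else true
noncomputable def w2 (p : P) : Val P := fun r => if r = p then false else true

noncomputable def rho1 : Val P → ℕ∞ := fun v => if v = v1 then 0 else ⊤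

noncomputable def rho2 (p q : P) : Val P → ℕ∞ :=
  fun v => if v = w0 q then 0 else if v = w2 p then 1 else ⊤

noncomputable def R1 : RankedInterp P where
  rk := rho1
  convex := by
    intro v i hv j hj
    by_cases h : v = v1
    · simp only [rho1, if_pos h] at hv
      have : i = 0 := by exact_mod_cast hv.symm
      omega
    · simp only [rho1, if_neg h] at hv
      exact absurd hv.symm (by simp)

lemma w2_ne_w0 {p q : P} (hpq : p ≠ q) : (w2 p : Val P) ≠ w0 q := by
  intro h
  have := congrFun h p
  simp [w0, w2, hpq] at this

noncomputable def R2 (p q : P) (hpq : p ≠ q) : RankedInterp P where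
  rk := rho2 p q
  convex := by
    intro v i hv j hj
    by_cases h0 : v = w0 q
    · simp only [rho2, if_pos h0] at hv
      have : i = 0 := by exact_mod_cast hv.symm
      omega
    · by_cases h2 : v = w2 p
      · simp only [rho2, if_neg h0, if_pos h2] at hv
        have : i = 1 := by exact_mod_cast hv.symm
        have hj0 : j = 0 := by omega
        refine ⟨w0 q, ?_⟩
        simp [rho2, hj0]
      · simp only [rho2, if_neg h0, if_neg h2] at hv
        exact absurd hv.symm (by simp)

lemma rho1_lt_top {v : Val P} (h : rho1 v < ⊤) : v = v1 := by
  by_contra hne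
  simp [rho1, hne] at h

lemma R1_models (p q : P) : modelsSet (R1 : RankedInterp P) (KK p q) := by
  intro a ha v hv
  have hv1 : v = v1 := rho1_lt_top hv
  subst hv1
  rcases ha with rfl | ha
  · rw [sA, sat_impl]
    intro _
    rfl
  · rcases ha with rfl
    rw [sX, sat_impl]
    rintro ⟨-, hnp⟩
    exact absurd rfl hnp

lemma R1_typ_top : satR (rho1 : Val P → ℕ∞) v1 (PTL.typ PTL.top) := by
  refine ⟨trivial, fun v' hlt => ?_⟩
  have h1 : rho1 (v1 : Val P) = 0 := by simp [rho1]
  rw [h1] at hlt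
  exact absurd hlt (by simp)

lemma rho2_lt_top {p q : P} {v : Val P} (h : rho2 p q v < ⊤) :
    v = w0 q ∨ v = w2 p := by
  by_contra hne
  push_neg at hne
  simp [rho2, hne.1, hne.2] at h

lemma R2_models (p q : P) (hpq : p ≠ q) :
    modelsSet (R2 p q hpq) (KK p q) := by
  have hr0 : (R2 p q hpq).rk (w0 q) = 0 := by simp [R2, rho2]
  have hr2 : (R2 p q hpq).rk (w2 p) = 1 := by simp [R2, rho2, w2_ne_w0 hpq]
  intro a ha v hv
  have hv' : v = w0 q ∨ v = w2 p := rho2_lt_top (p := p) (q := q) hv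
  rcases ha with rfl | ha
  · -- sA
    rw [sA, sat_impl]
    rcases hv' with rfl | rfl
    · intro _
      show w0 q p = true
      simp [w0, hpq]
    · rintro ⟨-, hmin⟩
      exact absurd (hmin (w0 q) (by rw [hr0, hr2]; exact zero_lt_one) trivial) not_false
  · rcases ha with rfl
    rw [sX, sat_impl]
    rcases hv' with rfl | rfl
    · rintro ⟨hq, -⟩
      have : w0 q q = true := hq
      simp [w0] at this
    · rintro ⟨hq, -⟩
      refine ⟨⟨trivial, hq⟩, ?_⟩
      rintro v' hlt ⟨-, hq'⟩
      rw [hr2] at hlt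
      by_cases h0 : v' = w0 q
      · subst h0
        have : w0 q q = true := hq'
        simp [w0] at this
      · by_cases h2 : v' = w2 p
        · subst h2
          rw [hr2] at hlt
          exact absurd hlt (lt_irrefl _)
        · simp [R2, rho2, h0, h2] at hlt

end PTLImpossible

open PTLImpossible in
/-- Impossibility theorem: if `P` has at least two atoms, no PTL
consequence operator satisfies all of P1, P2, P3, P5, P8 and P10. -/
theorem ptl_impossibility {P : Type u} [Fintype P] [DecidableEq P]
    (hP : ∃ p q : P, p ≠ q) :
    ¬ ∃ Cn : Set (PTL P) → Set (PTL P),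
      (∀ K : Set (PTL P), K ⊆ Cn K) ∧
      (∀ K K' : Set (PTL P), K ⊆ K' → K' ⊆ Cn K → Cn K' = Cn K) ∧
      (∀ K : Set (PTL P), Cn0 K ⊆ Cn K) ∧
      (∀ K : Set (PTL P), IsRationalConditional (inducedCond (Cn K))) ∧
      (∀ (K : Set (PTL P)) (a : PTL P), a.IsProp → (a ∈ Cn K ↔ a ∈ Cn0 K)) ∧
      (∀ (K : Set (PTL P)) (a : PTL P), a.IsProp →
        (PTL.impl (PTL.typ PTL.top) a ∈ Cn K ↔
          PTL.impl (PTL.typ PTL.top) a ∈ Cn0 K)) := by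
  rintro ⟨Cn, hP1, hP2, _hP3, hP5, hP8, hP10⟩
  obtain ⟨p, q, hpq⟩ := hP
  have hAK : sA p ∈ KK p q := Or.inl rfl
  have hXK : sX p q ∈ KK p q := Or.inr rfl
  -- ⊤ |~ p
  have hCtp : inducedCond (Cn (KK p q)) PTL.top (PTL.atom p) :=
    ⟨trivial, trivial, hP1 _ hAK⟩
  -- not ⊤ |~ ¬q
  have hnot : ¬ inducedCond (Cn (KK p q)) PTL.top (PTL.neg (PTL.atom q)) := by
    rintro ⟨-, -, hmem⟩
    have h0 : PTL.impl (PTL.typ PTL.top) (PTL.neg (PTL.atom q)) ∈ Cn0 (KK p q) :=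
      (hP10 (KK p q) (PTL.neg (PTL.atom q)) (by exact trivial)).1 hmem
    have := h0 R1 (R1_models p q) v1 (by simp [RankedInterp.rk, R1, rho1])
    rw [sat_impl] at this
    exact this R1_typ_top rfl
  -- RM gives •(⊤∧q) → p
  obtain ⟨-, -, -, -, -, -, hRM⟩ := hP5 (KK p q)
  have hB : inducedCond (Cn (KK p q)) (PTL.conj PTL.top (PTL.atom q)) (PTL.atom p) :=
    hRM PTL.top (PTL.atom q) (PTL.atom p) trivial trivial trivial hCtp hnot
  have hBmem : sB p q ∈ Cn (KK p q) := hB.2.2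
  -- cumulativity
  set K' : Set (PTL P) := KK p q ∪ {sB p q} with hK'def
  have hEq : Cn K' = Cn (KK p q) := by
    refine hP2 _ _ Set.subset_union_left ?_
    rintro x (hx | hx)
    · exact hP1 _ hx
    · rcases hx with rfl; exact hBmem
  -- q → p is a ranked consequence of K'
  have hD0 : sD p q ∈ Cn0 K' := by
    intro R hR v hv
    rw [sD, sat_impl]
    intro hq
    by_contra hp
    have hX := hR (sX p q) (Or.inl hXK) v hv
    rw [sX, sat_impl] at hX
    have htyp := hX ⟨hq, hp⟩
    have hBv := hR (sB p q) (Or.inr rfl) v hv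
    rw [sB, sat_impl] at hBv
    exact hp (hBv htyp)
  -- so q → p ∈ Cn0 (KK p q) by P8 twice and cumulativity
  have hDprop : (sD p q : PTL P).IsProp := ⟨trivial, trivial⟩
  have hD : sD p q ∈ Cn0 (KK p q) := by
    have h1 : sD p q ∈ Cn K' := (hP8 K' _ hDprop).2 hD0
    rw [hEq] at h1
    exact (hP8 _ _ hDprop).1 h1
  -- refute with R2
  have h2 := hD (R2 p q hpq) (R2_models p q hpq) (w2 p)
    (by rw [show (R2 p q hpq).rk (w2 p) = 1 from by simp [R2, rho2, w2_ne_w0 hpq]]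
        exact lt_top_iff_ne_top.mpr (by simp))
  rw [sD, sat_impl] at h2
  have hq2 : (w2 p : Val P) q = true := by simp [w2, Ne.symm hpq]
  have hp2 : w2 p p = true := h2 hq2
  simp [w2] at hp2
end

section
/- Let K ⊆ L• be a knowledge base each of whose members is in normal form, and define R_i and S_i as in the LM-minimal construction. Then for every i ≥ 1, the interpretation (R_i)^∞_{S_i} (equivalently (R_{i-1})^∞_{S_i}, since R_i agrees with R_{i-1} on S_i) is a ranked interpretation and a ranked model of K. -/
attribute [local instance] Classical.propDecidable

universe u

/-- Conjunction of a list of sentences (empty conjunction is `⊤`). -/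
def bigConj {P : Type u} : List (PTL P) → PTL P
  | [] => PTL.top
  | a :: l => PTL.conj a (bigConj l)

/-- Disjunction of a list of sentences (empty disjunction is `⊥`). -/
def bigDisj {P : Type u} : List (PTL P) → PTL P
  | [] => PTL.bot
  | a :: l => PTL.disj a (bigDisj l)

/-- `a` is in normal form: `⋀_{i≤t} •θᵢ → (φ ∨ ⋁_{i≤s} •ψᵢ)` with all the
`θᵢ`, `φ`, `ψᵢ` purely propositional. -/
def InNormalForm {P : Type u} (a : PTL P) : Prop :=
  ∃ (ths : List (PTL P)) (phi : PTL P) (pss : List (PTL P)),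
    (∀ t ∈ ths, t.IsProp) ∧ phi.IsProp ∧ (∀ s ∈ pss, s.IsProp) ∧
    a = PTL.impl (bigConj (ths.map PTL.typ)) (PTL.disj phi (bigDisj (pss.map PTL.typ)))

/-- `R^1_S`: increase by one the rank of every valuation not in `S`. -/
noncomputable def bump {P : Type u} (rho : Val P → ℕ∞) (S : Set (Val P)) : Val P → ℕ∞ :=
  fun v => if v ∈ S then rho v else rho v + 1

/-- `R^∞_S`: make every valuation not in `S` impossible. -/
noncomputable def toInf {P : Type u} (rho : Val P → ℕ∞) (S : Set (Val P)) : Val P → ℕ∞ :=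
  fun v => if v ∈ S then rho v else ⊤

/-- `⟦K⟧_rho`: the possible valuations satisfying every member of `K`. -/
def KExt {P : Type u} (K : Set (PTL P)) (rho : Val P → ℕ∞) : Set (Val P) :=
  {v | rho v < ⊤ ∧ ∀ a ∈ K, satR rho v a}

/-- The sequence `R_i` of the LM-minimal construction. -/
noncomputable def Rseq {P : Type u} (K : Set (PTL P)) : ℕ → Val P → ℕ∞
  | 0 => fun _ => 0
  | i + 1 => bump (Rseq K i) (KExt K (Rseq K i))

/-- The sequence `S_i` of the LM-minimal construction:
`S_0 = ∅`, `S_{i+1} = ⟦K⟧_{R_i}`. -/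
noncomputable def Sseq {P : Type u} (K : Set (PTL P)) : ℕ → Set (Val P)
  | 0 => ∅
  | i + 1 => KExt K (Rseq K i)

/-! Sentences in normal form apply `•` only to propositional sentences, so their truth at `v`
depends only on which valuations lie strictly below `v`. By induction every valuation outside
`S_{i+1}` lies on the top level `i` of `R_i`; hence for `v ∈ S_{i+1}` the valuations below `v` are
the same under `R_i`, `R_{i+1}` and `(R_i)^∞_{S_{i+1}}`. This gives `S_{i+1} ⊆ S_{i+2}` and shows
that `(R_i)^∞_{S_{i+1}}` is a model of `K`. For convexity, if no member of `S_{i+1}` had rank `i`,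
the valuations below a top-level `v` would again be the same under `R_i` and `R_{i+1}`, so every
`v ∈ S_{i+2}` would already lie in `S_{i+1}`. -/

namespace PTL

def IsFlat {P : Type u} : PTL P → Prop
  | atom _ => True
  | neg a => IsFlat a
  | conj a b => IsFlat a ∧ IsFlat b
  | top => True
  | bot => True
  | typ a => a.IsProp

variable {P : Type u}

theorem IsProp.isFlat {a : PTL P} (ha : a.IsProp) : a.IsFlat := by
  induction a with
  | atom | top | bot => trivial
  | neg a ih => exact ih ha
  | conj a b iha ihb => exact ⟨iha ha.1, ihb ha.2⟩
  | typ a => exact ha.elim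

theorem isFlat_bigConj_map_typ {l : List (PTL P)} (hl : ∀ a ∈ l, a.IsProp) :
    (bigConj (l.map typ)).IsFlat := by
  induction l with
  | nil => trivial
  | cons a l ih => exact ⟨hl a (by simp), ih fun b hb => hl b (by simp [hb])⟩

theorem isFlat_bigDisj_map_typ {l : List (PTL P)} (hl : ∀ a ∈ l, a.IsProp) :
    (bigDisj (l.map typ)).IsFlat := by
  induction l with
  | nil => trivial
  | cons a l ih => exact ⟨hl a (by simp), ih fun b hb => hl b (by simp [hb])⟩

end PTL

section Ranking

variable {P : Type u}

theorem InNormalForm.isFlat {a : PTL P} (ha : InNormalForm a) : a.IsFlat := by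
  obtain ⟨ths, phi, pss, hths, hphi, hpss, rfl⟩ := ha
  exact ⟨PTL.isFlat_bigConj_map_typ hths, hphi.isFlat, PTL.isFlat_bigDisj_map_typ hpss⟩

theorem satR_iff_of_isProp {a : PTL P} (ha : a.IsProp) (rho rho' : Val P → ℕ∞) (v : Val P) :
    satR rho v a ↔ satR rho' v a := by
  induction a with
  | atom | top | bot => rfl
  | neg a ih => exact not_congr (ih ha)
  | conj a b iha ihb => exact and_congr (iha ha.1) (ihb ha.2)
  | typ a => exact ha.elim

theorem satR_iff_of_lt_iff {rho rho' : Val P → ℕ∞} {v : Val P}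
    (h : ∀ u, rho u < rho v ↔ rho' u < rho' v) {a : PTL P} (ha : a.IsFlat) :
    satR rho v a ↔ satR rho' v a := by
  induction a with
  | atom | top | bot => rfl
  | neg a ih => exact not_congr (ih ha)
  | conj a b iha ihb => exact and_congr (iha ha.1) (ihb ha.2)
  | typ a =>
      refine and_congr (satR_iff_of_isProp ha rho rho' v) (forall_congr' fun u => ?_)
      rw [h u, satR_iff_of_isProp ha rho rho' u]

theorem mem_KExt_of_lt_iff {K : Set (PTL P)} (hK : ∀ a ∈ K, InNormalForm a)
    {rho rho' : Val P → ℕ∞} {v : Val P} (hv : v ∈ KExt K rho) (hfin : rho' v < ⊤)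
    (h : ∀ u, rho u < rho v ↔ rho' u < rho' v) : v ∈ KExt K rho' :=
  ⟨hfin, fun a ha => (satR_iff_of_lt_iff h (hK a ha).isFlat).1 (hv.2 a ha)⟩

theorem lt_iff_lt_of_eqOn {rho rho' : Val P → ℕ∞} {S : Set (Val P)} (heq : S.EqOn rho rho')
    (hle : ∀ u ∉ S, rho u ≤ rho' u) {v : Val P} (hv : v ∈ S) (hmax : ∀ u ∉ S, rho v ≤ rho u)
    (u : Val P) : rho u < rho v ↔ rho' u < rho' v := by
  by_cases hu : u ∈ S
  · rw [heq hu, heq hv]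
  · rw [← heq hv]
    exact iff_of_false (hmax u hu).not_gt ((hmax u hu).trans (hle u hu)).not_gt

theorem toInf_bump_self (rho : Val P → ℕ∞) (S : Set (Val P)) :
    toInf (bump rho S) S = toInf rho S := by
  funext v
  by_cases hv : v ∈ S <;> simp [toInf, bump, hv]

theorem rkConvex_toInf_iff {rho : Val P → ℕ∞} {S : Set (Val P)} :
    RkConvex (toInf rho S) ↔
      ∀ v ∈ S, ∀ i : ℕ, rho v = i → ∀ j < i, ∃ w ∈ S, rho w = j := by
  have hval : ∀ v (n : ℕ), toInf rho S v = n ↔ v ∈ S ∧ rho v = n := fun v n => by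
    by_cases hv : v ∈ S <;> simp [toInf, hv]
  simp only [RkConvex, hval]
  grind

variable {K : Set (PTL P)} (hK : ∀ a ∈ K, InNormalForm a)
include hK

theorem KExt_subset_KExt_bump {rho : Val P → ℕ∞}
    (hmax : ∀ u ∉ KExt K rho, ∀ w, rho w ≤ rho u) :
    KExt K rho ⊆ KExt K (bump rho (KExt K rho)) := by
  intro v hv
  have heq : (KExt K rho).EqOn rho (bump rho (KExt K rho)) := fun u hu => (if_pos hu).symm
  refine mem_KExt_of_lt_iff hK hv (heq hv ▸ hv.1) (lt_iff_lt_of_eqOn heq ?_ hv (hmax · · v))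
  intro u hu
  simp [bump, hu]

theorem modelsR_toInf_KExt {rho : Val P → ℕ∞} (hmax : ∀ u ∉ KExt K rho, ∀ w, rho w ≤ rho u) :
    ∀ a ∈ K, modelsR (toInf rho (KExt K rho)) a := by
  intro a ha v hv
  have hvS : v ∈ KExt K rho := by
    by_contra h
    rw [toInf, if_neg h] at hv
    exact lt_irrefl _ hv
  have heq : (KExt K rho).EqOn rho (toInf rho (KExt K rho)) := fun u hu => (if_pos hu).symm
  have hmem := mem_KExt_of_lt_iff hK hvS hv
    (lt_iff_lt_of_eqOn heq (fun u hu => by simp [toInf, hu]) hvS (hmax · · v))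
  exact hmem.2 a ha

/-- Below a valuation of rank `m` (rank `m + 1` after bumping) lie exactly the members of
`⟦K⟧_rho`. -/
theorem mem_KExt_of_mem_KExt_bump {rho : Val P → ℕ∞} {m : ℕ} (hle : ∀ u, rho u ≤ m)
    (htop : ∀ u ∉ KExt K rho, rho u = m) (hgap : ∀ u ∈ KExt K rho, rho u ≠ m) {v : Val P}
    (hv : v ∈ KExt K (bump rho (KExt K rho))) : v ∈ KExt K rho := by
  by_contra hvS
  have hbump : ∀ u ∉ KExt K rho, bump rho (KExt K rho) u = m + 1 := fun u hu => by
    simp [bump, hu, htop u hu]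
  apply hvS
  refine mem_KExt_of_lt_iff hK hv (by rw [htop v hvS]; exact ENat.natCast_lt_top m) fun u => ?_
  rw [hbump v hvS, htop v hvS]
  by_cases hu : u ∈ KExt K rho
  · have hlt : rho u < m := (hle u).lt_of_ne (hgap u hu)
    simp only [bump, hu, if_true]
    exact iff_of_true (hlt.trans_le le_self_add) hlt
  · rw [hbump u hu, htop u hu]
    exact iff_of_false (lt_irrefl _) (lt_irrefl _)

end Ranking

section Construction

variable {P : Type u} (K : Set (PTL P))

theorem Rseq_le (i : ℕ) (v : Val P) : Rseq K i v ≤ i := by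
  induction i with
  | zero => simp [Rseq]
  | succ i ih =>
      simp only [Rseq, bump, Nat.cast_succ]
      split_ifs
      · exact ih.trans le_self_add
      · gcongr

variable {K} (hK : ∀ a ∈ K, InNormalForm a)
include hK

theorem Rseq_eq_of_notMem_KExt (i : ℕ) {u : Val P} (hu : u ∉ KExt K (Rseq K i)) :
    Rseq K i u = i := by
  induction i generalizing u with
  | zero => rfl
  | succ i ih =>
      have hmax : ∀ u ∉ KExt K (Rseq K i), ∀ w, Rseq K i w ≤ Rseq K i u :=
        fun u hu w => (Rseq_le K i w).trans_eq (ih hu).symm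
      have hu' : u ∉ KExt K (Rseq K i) := fun h => hu (KExt_subset_KExt_bump hK hmax h)
      simp [Rseq, bump, hu', ih hu']

theorem Rseq_le_Rseq_of_notMem_KExt (i : ℕ) :
    ∀ u ∉ KExt K (Rseq K i), ∀ w, Rseq K i w ≤ Rseq K i u :=
  fun _ hu w => (Rseq_le K i w).trans_eq (Rseq_eq_of_notMem_KExt hK i hu).symm

theorem rkConvex_toInf_Rseq (i : ℕ) : RkConvex (toInf (Rseq K i) (KExt K (Rseq K i))) := by
  rw [rkConvex_toInf_iff]
  induction i with
  | zero =>
      intro v _ n hn j hj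
      have : n = 0 := by simpa [Rseq, eq_comm] using hn
      omega
  | succ i ih =>
      set R := Rseq K i
      set S := KExt K R
      have hR : Rseq K (i + 1) = bump R S := rfl
      rw [hR]
      have lift : ∀ w ∈ S, ∀ j : ℕ, R w = j → ∃ w ∈ KExt K (bump R S), bump R S w = j :=
        fun w hw j hwj => ⟨w, KExt_subset_KExt_bump hK (Rseq_le_Rseq_of_notMem_KExt hK i) hw,
          by simp [bump, hw, hwj]⟩
      intro v hv n hn j hj
      by_cases hvS : v ∈ S
      · simp only [bump, hvS, if_true] at hn
        obtain ⟨w, hw, hwj⟩ := ih v hvS n hn j hj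
        exact lift w hw j hwj
      have hRv : R v = i := Rseq_eq_of_notMem_KExt hK i hvS
      have hji : j ≤ i := by
        simp only [bump, hvS, if_false, hRv] at hn
        have : n = i + 1 := by exact_mod_cast hn.symm
        omega
      obtain ⟨w₀, hw₀, hRw₀⟩ : ∃ w ∈ S, R w = i := by
        by_contra! hgap
        exact hvS (mem_KExt_of_mem_KExt_bump hK (Rseq_le K i)
          (fun u hu => Rseq_eq_of_notMem_KExt hK i hu) hgap hv)
      rcases hji.eq_or_lt with rfl | hlt
      · exact lift w₀ hw₀ j hRw₀
      · obtain ⟨w, hw, hwj⟩ := ih w₀ hw₀ i hRw₀ j hlt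
        exact lift w hw j hwj

end Construction

theorem ptl_stage_is_model_general {P : Type u}
    (K : Set (PTL P)) (hK : ∀ a ∈ K, InNormalForm a) (i : ℕ) :
    RkConvex (toInf (Rseq K i) (Sseq K i)) ∧
    ∀ a ∈ K, modelsR (toInf (Rseq K i) (Sseq K i)) a := by
  cases i with
  | zero => simp [RkConvex, modelsR, Sseq, toInf]
  | succ k =>
      rw [Sseq, Rseq, toInf_bump_self]
      exact ⟨rkConvex_toInf_Rseq hK k, modelsR_toInf_KExt hK (Rseq_le_Rseq_of_notMem_KExt hK k)⟩

/-- for every `i ≥ 1`, `(R_i)^∞_{S_i}` is a ranked interpretation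
and a ranked model of `K`. -/
theorem ptl_stage_is_model {P : Type u} [Fintype P] [DecidableEq P]
    (K : Set (PTL P)) (hK : ∀ a ∈ K, InNormalForm a) (i : ℕ) (hi : 1 ≤ i) :
    RkConvex (toInf (Rseq K i) (Sseq K i)) ∧
    ∀ a ∈ K, modelsR (toInf (Rseq K i) (Sseq K i)) a :=
  ptl_stage_is_model_general K hK i
end

section
/- LM-entailment does not satisfy Strict Entailment: let P = {f, p, r} consist of three distinct atoms, and let K = {•⊤ → (¬p ∧ ¬r), •p → •¬f, •r → •f, p → ¬r}. Then ¬p ∈ Cn_LM(K) but ¬p ∉ Cn0(K); i.e., there exist a knowledge base K and a purely propositional sentence α with α ∈ Cn_LM(K) and α ∉ Cn0(K). -/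
attribute [local instance] Classical.propDecidable

universe u

/-- The least `i ≥ 1` with `S_i = S_{i-1}`. -/
noncomputable def stopIdx {P : Type u} (K : Set (PTL P)) : ℕ :=
  sInf {i : ℕ | 1 ≤ i ∧ Sseq K i = Sseq K (i - 1)}

/-- The LM-minimal ranked interpretation `R*_K := (R_{i-1})^∞_{S_i}`. -/
noncomputable def Rstar {P : Type u} (K : Set (PTL P)) : Val P → ℕ∞ :=
  toInf (Rseq K (stopIdx K - 1)) (Sseq K (stopIdx K))

/-- LM-entailment consequences of `K`: sentences holding in `R*_K`. -/
def CnLM {P : Type u} (K : Set (PTL P)) : Set (PTL P) :=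
  {a | modelsR (Rstar K) a}

/-- The atom `f` ("flies"). -/
def fA : PTL (Fin 3) := PTL.atom 0
/-- The atom `p` ("penguin"). -/
def pA : PTL (Fin 3) := PTL.atom 1
/-- The atom `r` ("robin"). -/
def rA : PTL (Fin 3) := PTL.atom 2

/-- The knowledge base
`{•⊤ → (¬p ∧ ¬r), •p → •¬f, •r → •f, p → ¬r}`. -/
def Keg : Set (PTL (Fin 3)) :=
  {PTL.impl (PTL.typ PTL.top) (PTL.conj (PTL.neg pA) (PTL.neg rA)),
   PTL.impl (PTL.typ pA) (PTL.typ (PTL.neg fA)),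
   PTL.impl (PTL.typ rA) (PTL.typ fA),
   PTL.impl pA (PTL.neg rA)}

/-! ### Auxiliary material for the proof -/

/-- The valuation `f ↦ true, p ↦ false, r ↦ false`. -/
def vA : Val (Fin 3) := ![true, false, false]
/-- The valuation `f ↦ false, p ↦ true, r ↦ false`. -/
def vB : Val (Fin 3) := ![false, true, false]

lemma vB_ne_vA : vB ≠ vA := by
  intro h
  have := congrFun h 0
  simp [vA, vB] at this

/-- The set `S₁` in the construction for `Keg`. -/
def S1 : Set (Val (Fin 3)) := {v | v 1 = false ∧ v 2 = false}

lemma vA_mem_S1 : vA ∈ S1 := ⟨rfl, rfl⟩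

noncomputable def rho1 : Val (Fin 3) → ℕ∞ := fun v => if v ∈ S1 then 0 else 1

lemma kext0 : KExt Keg (fun _ => (0 : ℕ∞)) = S1 := by
  ext v
  constructor
  · rintro ⟨-, hsat⟩
    have h1 := hsat (PTL.impl (PTL.typ PTL.top)
      (PTL.conj (PTL.neg pA) (PTL.neg rA))) (by simp [Keg])
    simp only [satR, PTL.impl, pA, rA] at h1
    have hC : ¬ (v 1 = true) ∧ ¬ (v 2 = true) := by
      by_contra hc
      exact h1 ⟨⟨trivial, fun v' hv' => absurd hv' (lt_irrefl _)⟩, hc⟩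
    exact ⟨by simpa using hC.1, by simpa using hC.2⟩
  · intro hv
    have hp := hv.1
    have hr := hv.2
    refine ⟨by simp, ?_⟩
    intro a ha
    simp only [Keg, Set.mem_insert_iff, Set.mem_singleton_iff] at ha
    rcases ha with rfl | rfl | rfl | rfl
    · simp only [satR, PTL.impl, pA, rA]
      rintro ⟨-, hc⟩
      exact hc ⟨by simp [hp], by simp [hr]⟩
    · simp only [satR, PTL.impl, pA, fA]
      rintro ⟨⟨hvp, -⟩, -⟩
      simp [hp] at hvp
    · simp only [satR, PTL.impl, rA, fA]
      rintro ⟨⟨hvr, -⟩, -⟩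
      simp [hr] at hvr
    · simp only [satR, PTL.impl, pA, rA]
      rintro ⟨hvp, -⟩
      simp [hp] at hvp

lemma rho1_lt_one {v : Val (Fin 3)} (h : rho1 v < 1) : v ∈ S1 := by
  by_cases hv : v ∈ S1
  · exact hv
  · simp [rho1, hv] at h

lemma kext1 : KExt Keg rho1 = S1 := by
  ext v
  constructor
  · rintro ⟨-, hsat⟩
    have h2 := hsat (PTL.impl (PTL.typ pA) (PTL.typ (PTL.neg fA))) (by simp [Keg])
    have h3 := hsat (PTL.impl (PTL.typ rA) (PTL.typ fA)) (by simp [Keg])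
    simp only [satR, PTL.impl, fA, pA, rA] at h2 h3
    have hp : v 1 = false := by
      by_contra hp
      rw [Bool.not_eq_false] at hp
      have hvns : v ∉ S1 := by
        intro hv; rw [hv.1] at hp; exact Bool.false_ne_true hp
      have hr1 : rho1 v = 1 := if_neg hvns
      have hmin1 : ∀ v' : Val (Fin 3), rho1 v' < rho1 v → ¬ (v' 1 = true) := by
        intro v' hv' hc
        rw [hr1] at hv'
        have hvf := (rho1_lt_one hv').1
        rw [hvf] at hc
        exact Bool.false_ne_true hc
      have hTnf : ¬ (v 0 = true) ∧
          ∀ v' : Val (Fin 3), rho1 v' < rho1 v → ¬ ¬ (v' 0 = true) := by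
        by_contra hc
        exact h2 ⟨⟨hp, hmin1⟩, hc⟩
      have hlt : rho1 (fun _ => false) < rho1 v := by
        rw [hr1, show rho1 (fun _ => false) = 0 from
          if_pos (show (fun _ => false) ∈ S1 from ⟨rfl, rfl⟩)]
        exact zero_lt_one
      exact hTnf.2 (fun _ => false) hlt Bool.false_ne_true
    have hr : v 2 = false := by
      by_contra hr
      rw [Bool.not_eq_false] at hr
      have hvns : v ∉ S1 := by
        intro hv; rw [hv.2] at hr; exact Bool.false_ne_true hr
      have hr1 : rho1 v = 1 := if_neg hvns
      have hmin2 : ∀ v' : Val (Fin 3), rho1 v' < rho1 v → ¬ (v' 2 = true) := by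
        intro v' hv' hc
        rw [hr1] at hv'
        have hvf := (rho1_lt_one hv').2
        rw [hvf] at hc
        exact Bool.false_ne_true hc
      have hTf : (v 0 = true) ∧
          ∀ v' : Val (Fin 3), rho1 v' < rho1 v → ¬ (v' 0 = true) := by
        by_contra hc
        exact h3 ⟨⟨hr, hmin2⟩, hc⟩
      have hlt : rho1 vA < rho1 v := by
        rw [hr1, show rho1 vA = 0 from if_pos vA_mem_S1]
        exact zero_lt_one
      exact hTf.2 vA hlt rfl
    exact ⟨hp, hr⟩
  · intro hv
    have hp := hv.1
    have hr := hv.2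
    refine ⟨by rw [show rho1 v = 0 from if_pos hv]; exact (by simp), ?_⟩
    intro a ha
    simp only [Keg, Set.mem_insert_iff, Set.mem_singleton_iff] at ha
    rcases ha with rfl | rfl | rfl | rfl
    · simp only [satR, PTL.impl, pA, rA]
      rintro ⟨-, hc⟩
      exact hc ⟨by simp [hp], by simp [hr]⟩
    · simp only [satR, PTL.impl, pA, fA]
      rintro ⟨⟨hvp, -⟩, -⟩
      simp [hp] at hvp
    · simp only [satR, PTL.impl, rA, fA]
      rintro ⟨⟨hvr, -⟩, -⟩
      simp [hr] at hvr
    · simp only [satR, PTL.impl, pA, rA]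
      rintro ⟨hvp, -⟩
      simp [hp] at hvp

lemma rseq1 : Rseq Keg 1 = rho1 := by
  show bump (Rseq Keg 0) (KExt Keg (Rseq Keg 0)) = rho1
  rw [show Rseq Keg 0 = (fun _ => (0 : ℕ∞)) from rfl, kext0]
  funext v
  simp [bump, rho1]

lemma sseq1 : Sseq Keg 1 = S1 := by
  show KExt Keg (Rseq Keg 0) = S1
  rw [show Rseq Keg 0 = (fun _ => (0 : ℕ∞)) from rfl]
  exact kext0

lemma sseq2 : Sseq Keg 2 = S1 := by
  show KExt Keg (Rseq Keg 1) = S1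
  rw [rseq1]; exact kext1

lemma stop2 : stopIdx Keg = 2 := by
  have h2 : 2 ∈ {i : ℕ | 1 ≤ i ∧ Sseq Keg i = Sseq Keg (i - 1)} := by
    refine ⟨by norm_num, ?_⟩
    show Sseq Keg 2 = Sseq Keg 1
    rw [sseq2, sseq1]
  refine le_antisymm (Nat.sInf_le h2) (le_csInf ⟨2, h2⟩ ?_)
  rintro m ⟨h1m, heq⟩
  by_contra h
  push_neg at h
  interval_cases m
  rw [sseq1] at heq
  have : vA ∈ Sseq Keg 0 := heq ▸ vA_mem_S1
  simp [Sseq] at this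

lemma rstar_eq : Rstar Keg = toInf rho1 S1 := by
  unfold Rstar
  rw [stop2, sseq2, show (2 : ℕ) - 1 = 1 from rfl, rseq1]

/-- The countermodel ranking function. -/
noncomputable def crk : Val (Fin 3) → ℕ∞ :=
  fun v => if v = vA then 0 else if v = vB then 1 else ⊤

lemma crk_vA : crk vA = 0 := if_pos rfl

lemma crk_vB : crk vB = 1 := by
  rw [crk, if_neg vB_ne_vA, if_pos rfl]

lemma crk_lt_one {v : Val (Fin 3)} (h : crk v < 1) : v = vA := by
  by_cases h1 : v = vA
  · exact h1
  · by_cases h2 : v = vB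
    · rw [crk, if_neg h1, if_pos h2] at h; exact absurd h (lt_irrefl _)
    · rw [crk, if_neg h1, if_neg h2] at h
      exact absurd h (by simp)

lemma crk_convex : RkConvex crk := by
  intro v i hvi j hj
  by_cases h1 : v = vA
  · rw [h1, crk_vA] at hvi
    have : i = 0 := by exact_mod_cast hvi.symm
    omega
  · by_cases h2 : v = vB
    · rw [h2, crk_vB] at hvi
      have hi : i = 1 := by exact_mod_cast hvi.symm
      have hj0 : j = 0 := by omega
      exact ⟨vA, by rw [crk_vA, hj0]; simp⟩
    · rw [crk, if_neg h1, if_neg h2] at hvi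
      exact absurd hvi.symm (ENat.coe_ne_top i)

/-- LM-entailment does not satisfy Strict Entailment: for the
example knowledge base, `¬p ∈ Cn_LM(K)` but `¬p ∉ Cn0(K)`; hence some purely
propositional sentence is LM-entailed but not ranked-entailed. -/
theorem ptl_CnLM_fails_strict_entailment :
    (PTL.neg pA ∈ CnLM Keg ∧ PTL.neg pA ∉ Cn0 Keg) ∧
    ∃ (K : Set (PTL (Fin 3))) (a : PTL (Fin 3)),
      a.IsProp ∧ a ∈ CnLM K ∧ a ∉ Cn0 K := by
  have hLM : PTL.neg pA ∈ CnLM Keg := by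
    intro v hv
    rw [rstar_eq] at hv
    by_cases hs : v ∈ S1
    · simp only [satR, pA]
      simp [hs.1]
    · rw [toInf, if_neg hs] at hv
      exact absurd hv (lt_irrefl _)
  have hC0 : PTL.neg pA ∉ Cn0 Keg := by
    intro h
    have hfin : ∀ v : Val (Fin 3), crk v < ⊤ → v = vA ∨ v = vB := by
      intro v hvlt
      by_cases h1 : v = vA
      · exact Or.inl h1
      · by_cases h2 : v = vB
        · exact Or.inr h2
        · rw [crk, if_neg h1, if_neg h2] at hvlt
          exact absurd hvlt (lt_irrefl _)
    have hmod : modelsSet ⟨crk, crk_convex⟩ Keg := by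
      show ∀ a ∈ Keg, modelsR crk a
      intro a ha v hv
      simp only [Keg, Set.mem_insert_iff, Set.mem_singleton_iff] at ha
      rcases hfin v hv with rfl | rfl
      · rcases ha with rfl | rfl | rfl | rfl
        · simp only [satR, PTL.impl, pA, rA]
          rintro ⟨-, hc⟩
          exact hc ⟨by decide, by decide⟩
        · simp only [satR, PTL.impl, pA, fA]
          rintro ⟨⟨h1, -⟩, -⟩
          exact absurd h1 (by decide)
        · simp only [satR, PTL.impl, rA, fA]
          rintro ⟨⟨h1, -⟩, -⟩
          exact absurd h1 (by decide)
        · simp only [satR, PTL.impl, pA, rA]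
          rintro ⟨h1, -⟩
          exact absurd h1 (by decide)
      · rcases ha with rfl | rfl | rfl | rfl
        · simp only [satR, PTL.impl, pA, rA]
          rintro ⟨⟨-, hmin⟩, -⟩
          exact hmin vA (by rw [crk_vA, crk_vB]; exact zero_lt_one) trivial
        · simp only [satR, PTL.impl, pA, fA]
          rintro ⟨-, hc⟩
          apply hc
          refine ⟨by decide, fun v' hv' hcf => ?_⟩
          have hva : v' = vA := crk_lt_one (by rwa [crk_vB] at hv')
          rw [hva] at hcf
          exact hcf rfl
        · simp only [satR, PTL.impl, rA, fA]
          rintro ⟨⟨h1, -⟩, -⟩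
          exact absurd h1 (by decide)
        · simp only [satR, PTL.impl, pA, rA]
          rintro ⟨-, hc⟩
          exact hc (by decide)
    have hmodn : modelsR crk (PTL.neg pA) := h ⟨crk, crk_convex⟩ hmod
    have hlt : crk vB < ⊤ := by rw [crk_vB]; exact lt_top_iff_ne_top.2 (by simp)
    have := hmodn vB hlt
    simp only [satR, pA] at this
    exact this rfl
  exact ⟨⟨hLM, hC0⟩, Keg, PTL.neg pA, trivial, hLM, hC0⟩
end

section
/- If R and R' are ranked interpretations satisfying exactly the same set of conditionals — i.e., for all purely propositional α, β ∈ L, R satisfies α |~ β if and only if R' satisfies α |~ β — then R = R'. -/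
attribute [local instance] Classical.propDecidable

universe u

/-- `rho` satisfies the conditional `a |~ b`: every `≺`-minimal possible
`a`-valuation satisfies `b`. -/
def condSatRho {P : Type u} (rho : Val P → ℕ∞) (a b : PTL P) : Prop :=
  ∀ v, rho v < ⊤ → satR rho v a →
    (∀ u, rho u < ⊤ → satR rho u a → ¬ rho u < rho v) → satR rho v b

section Aux

variable {P : Type u}

/-- Propositional satisfaction doesn't depend on the ranking. -/
lemma satR_prop_indep (rho rho' : Val P → ℕ∞) (a : PTL P) (ha : a.IsProp)
    (v : Val P) : satR rho v a ↔ satR rho' v a := by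
  induction a with
  | atom p => simp [satR]
  | neg a ih => simpa [satR] using not_congr (ih ha)
  | conj a b iha ihb =>
      simpa [satR] using and_congr (iha ha.1) (ihb ha.2)
  | top => simp [satR]
  | bot => simp [satR]
  | typ a ih => exact absurd ha id

/-- A literal fixing the value of atom `p` as in `v`. -/
def lit (v : Val P) (p : P) : PTL P :=
  if v p then PTL.atom p else PTL.neg (PTL.atom p)

lemma lit_isProp (v : Val P) (p : P) : (lit v p).IsProp := by
  unfold lit; split <;> trivial

lemma satR_lit (rho : Val P → ℕ∞) (u v : Val P) (p : P) :
    satR rho u (lit v p) ↔ u p = v p := by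
  unfold lit
  cases hv : v p <;> cases hu : u p <;> simp [satR, hu]

/-- Conjunction of a list of sentences. -/
def conjList : List (PTL P) → PTL P
  | [] => PTL.top
  | a :: l => PTL.conj a (conjList l)

lemma conjList_isProp (l : List (PTL P)) (hl : ∀ a ∈ l, a.IsProp) :
    (conjList l).IsProp := by
  induction l with
  | nil => trivial
  | cons a l ih =>
      exact ⟨hl a (by simp), ih fun b hb => hl b (by simp [hb])⟩

lemma satR_conjList (rho : Val P → ℕ∞) (u : Val P) (l : List (PTL P)) :
    satR rho u (conjList l) ↔ ∀ a ∈ l, satR rho u a := by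
  induction l with
  | nil => simp [conjList, satR]
  | cons a l ih => simp [conjList, satR, ih]

variable [Fintype P]

/-- Characteristic formula of a valuation. -/
noncomputable def charF (v : Val P) : PTL P :=
  conjList ((Finset.univ : Finset P).toList.map (lit v))

lemma charF_isProp (v : Val P) : (charF v).IsProp := by
  refine conjList_isProp _ ?_
  intro a ha
  rcases List.mem_map.1 ha with ⟨p, _, rfl⟩
  exact lit_isProp v p

lemma satR_charF (rho : Val P → ℕ∞) (u v : Val P) :
    satR rho u (charF v) ↔ u = v := by
  rw [charF, satR_conjList]
  constructor
  · intro hall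
    funext p
    have := hall (lit v p) (List.mem_map.2 ⟨p, by simp, rfl⟩)
    exact (satR_lit rho u v p).1 this
  · intro hEq
    subst hEq
    intro a ha
    rcases List.mem_map.1 ha with ⟨p, _, rfl⟩
    exact (satR_lit rho _ _ p).2 rfl

lemma disj_isProp (a b : PTL P) (ha : a.IsProp) (hb : b.IsProp) :
    (PTL.disj a b).IsProp := ⟨ha, hb⟩

lemma satR_disj (rho : Val P → ℕ∞) (u : Val P) (a b : PTL P) :
    satR rho u (PTL.disj a b) ↔ satR rho u a ∨ satR rho u b := by
  simp [PTL.disj, satR]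
  tauto

/-- The conditional `charF v |~ ⊥` holds iff `v` has infinite rank. -/
lemma cond_char_bot (rho : Val P → ℕ∞) (v : Val P) :
    condSatRho rho (charF v) PTL.bot ↔ rho v = ⊤ := by
  constructor
  · intro hc
    by_contra hne
    have hv : rho v < ⊤ := lt_top_iff_ne_top.2 hne
    have := hc v hv ((satR_charF rho v v).2 rfl) ?_
    · exact this
    · intro w hw hsw
      have : w = v := (satR_charF rho w v).1 hsw
      subst this; exact lt_irrefl _
  · intro htop w hw hsw _
    have : w = v := (satR_charF rho w v).1 hsw
    subst this
    exact absurd htop (by simpa using hw.ne)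

/-- For distinct `u v` with `rho v` finite, the conditional
`charF u ∨ charF v |~ charF u` holds iff `rho u < rho v`. -/
lemma cond_char_lt (rho : Val P → ℕ∞) (u v : Val P) (huv : u ≠ v)
    (hv : rho v ≠ ⊤) :
    condSatRho rho (PTL.disj (charF u) (charF v)) (charF u) ↔
      rho u < rho v := by
  have hvlt : rho v < ⊤ := lt_top_iff_ne_top.2 hv
  constructor
  · intro hc
    by_contra hnl
    have hmin : ∀ w, rho w < ⊤ →
        satR rho w (PTL.disj (charF u) (charF v)) → ¬ rho w < rho v := by
      intro w hw hsw
      rcases (satR_disj rho w _ _).1 hsw with hsu | hsv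
      · have hwu : w = u := (satR_charF rho w u).1 hsu
        rw [hwu]; exact hnl
      · have hwv : w = v := (satR_charF rho w v).1 hsv
        rw [hwv]; exact lt_irrefl _
    have hsv : satR rho v (PTL.disj (charF u) (charF v)) :=
      (satR_disj rho v _ _).2 (Or.inr ((satR_charF rho v v).2 rfl))
    have := hc v hvlt hsv hmin
    exact huv ((satR_charF rho v u).1 this).symm
  · intro hlt w hw hsw hmin
    rcases (satR_disj rho w _ _).1 hsw with hsu | hsv
    · exact hsu
    · have hwv : w = v := (satR_charF rho w v).1 hsv
      have hu : rho u < ⊤ := lt_trans hlt hvlt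
      have hsu2 : satR rho u (PTL.disj (charF u) (charF v)) :=
        (satR_disj rho u _ _).2 (Or.inl ((satR_charF rho u u).2 rfl))
      exact absurd (by rw [hwv]; exact hlt) (hmin u hu hsu2)

/-- Two convex rankings with the same finite part and same strict order
are equal. -/
lemma rank_eq_of_same_order (rho rho' : Val P → ℕ∞)
    (hconv : RkConvex rho) (hconv' : RkConvex rho')
    (hfin : ∀ v, rho v = ⊤ ↔ rho' v = ⊤)
    (hlt : ∀ u v, rho v ≠ ⊤ → (rho u < rho v ↔ rho' u < rho' v)) :
    rho = rho' := by
  have key : ∀ n : ℕ, ∀ v, rho v = (n : ℕ∞) → rho' v = (n : ℕ∞) := by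
    intro n
    induction n using Nat.strong_induction_on with
    | _ n ih =>
      intro v hv
      have hvne : rho v ≠ ⊤ := by simp [hv]
      have hv'ne : rho' v ≠ ⊤ := fun hh => hvne ((hfin v).2 hh)
      rcases WithTop.ne_top_iff_exists.1 hv'ne with ⟨m, hm⟩
      rcases lt_trichotomy m n with hmn | hmn | hmn
      · -- m < n : convexity of rho gives u with rho u = m
        exfalso
        rcases hconv v n hv m hmn with ⟨u, hu⟩
        have hu' : rho' u = (m : ℕ∞) := ih m hmn u hu
        have : rho u < rho v := by
          rw [hu, hv]; exact Nat.cast_lt.2 hmn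
        have h2 : rho' u < rho' v := (hlt u v hvne).1 this
        rw [hu', ← hm] at h2
        exact lt_irrefl _ h2
      · rw [← hm]; exact congrArg (fun k : ℕ => (k : ℕ∞)) hmn
      · -- m > n : convexity of rho' gives u with rho' u = n
        exfalso
        rcases hconv' v m hm.symm n hmn with ⟨u, hu⟩
        have h2 : rho' u < rho' v := by
          rw [hu, ← hm]; exact Nat.cast_lt.2 hmn
        have h3 : rho u < rho v := (hlt u v hvne).2 h2
        rw [hv] at h3
        have hune : rho u ≠ ⊤ := ne_top_of_lt h3
        rcases WithTop.ne_top_iff_exists.1 hune with ⟨k, hk⟩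
        have hkn : k < n := by
          rw [← hk] at h3; exact Nat.cast_lt.1 h3
        have : rho' u = (k : ℕ∞) := ih k hkn u hk.symm
        rw [this] at hu
        exact absurd (WithTop.coe_injective hu) (Nat.ne_of_lt hkn)
  funext v
  by_cases hv : rho v = ⊤
  · rw [hv]; exact ((hfin v).1 hv).symm
  · rcases WithTop.ne_top_iff_exists.1 hv with ⟨n, hn⟩
    rw [← hn]; exact (key n v hn.symm).symm

end Aux

/-- two ranked interpretations satisfying exactly the same
conditionals (on purely propositional sentences) are equal. -/
theorem ptl_same_conditionals_eq {P : Type u} [Fintype P] [DecidableEq P]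
    (R R' : RankedInterp P)
    (h : ∀ a b : PTL P, a.IsProp → b.IsProp →
      (condSatRho R.rk a b ↔ condSatRho R'.rk a b)) :
    R = R' := by
  have hfin : ∀ v, R.rk v = ⊤ ↔ R'.rk v = ⊤ := by
    intro v
    rw [← cond_char_bot R.rk v, ← cond_char_bot R'.rk v]
    exact h (charF v) PTL.bot (charF_isProp v) trivial
  have hlt : ∀ u v, R.rk v ≠ ⊤ → (R.rk u < R.rk v ↔ R'.rk u < R'.rk v) := by
    intro u v hv
    have hv' : R'.rk v ≠ ⊤ := fun hh => hv ((hfin v).2 hh)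
    by_cases huv : u = v
    · subst huv; simp
    · rw [← cond_char_lt R.rk u v huv hv, ← cond_char_lt R'.rk u v huv hv']
      exact h _ _ (disj_isProp _ _ (charF_isProp u) (charF_isProp v))
        (charF_isProp u)
  have : R.rk = R'.rk :=
    rank_eq_of_same_order R.rk R'.rk R.convex R'.convex hfin hlt
  cases R; cases R'
  simpa using this
end

section
/- For all ranked interpretations R1 and R2: if R1 ≺_PT R2, then R1 ≺_LM R2. -/
attribute [local instance] Classical.propDecidable

universe u

/-- The cell of rank `i` of a ranking function. -/
def cell {P : Type u} (rho : Val P → ℕ∞) (i : ℕ∞) : Set (Val P) :=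
  {u | rho u = i}

/-- The LM preference `⪯_LM` on ranking functions: either all cells coincide,
or the cell of the first differing (finite) rank shrinks. -/
def LMle {P : Type u} (rho1 rho2 : Val P → ℕ∞) : Prop :=
  (∀ i : ℕ∞, cell rho1 i = cell rho2 i) ∨
  ∃ j : ℕ, (∀ k : ℕ, k < j → cell rho1 (k : ℕ∞) = cell rho2 (k : ℕ∞)) ∧
    cell rho1 (j : ℕ∞) ≠ cell rho2 (j : ℕ∞) ∧ cell rho2 (j : ℕ∞) ⊆ cell rho1 (j : ℕ∞)

/-- Strict LM preference. -/
def LMlt {P : Type u} (rho1 rho2 : Val P → ℕ∞) : Prop :=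
  LMle rho1 rho2 ∧ ¬ LMle rho2 rho1

/-- The PT preference `⪯_PT` on ranking functions: pointwise comparison. -/
def PTle {P : Type u} (rho1 rho2 : Val P → ℕ∞) : Prop :=
  ∀ w, rho1 w ≤ rho2 w

/-- Strict PT preference. -/
def PTlt {P : Type u} (rho1 rho2 : Val P → ℕ∞) : Prop :=
  PTle rho1 rho2 ∧ ¬ PTle rho2 rho1

/-! A pointwise lower ranking can only enlarge the first cell in which two rankings differ, so
`⪯_PT` implies `⪯_LM`. Mutual `⪯_LM` forces all finite cells, and hence the rankings, to coincide,
so strictness transfers as well. -/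

section RankingCells

variable {P : Type u} {rho1 rho2 : Val P → ℕ∞}

theorem eq_of_forall_cell_natCast_eq (h : ∀ n : ℕ, cell rho1 n = cell rho2 n) : rho1 = rho2 := by
  have mem_iff (w : Val P) (n : ℕ) : rho1 w = n ↔ rho2 w = n := Set.ext_iff.mp (h n) w
  funext w
  cases h1 : rho1 w with
  | top =>
    cases h2 : rho2 w with
    | top => rfl
    | coe n => simp [(mem_iff w n).mpr h2] at h1
  | coe n => exact ((mem_iff w n).mp h1).symm

theorem cell_subset_of_PTle (hle : PTle rho1 rho2) {j : ℕ}
    (hbelow : ∀ k < j, cell rho1 k = cell rho2 k) : cell rho2 j ⊆ cell rho1 j := by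
  intro u (hu : rho2 u = j)
  have hle_j : rho1 u ≤ j := hu ▸ hle u
  obtain ⟨k, hk⟩ := ENat.ne_top_iff_exists.mp (ne_top_of_le_ne_top (ENat.natCast_ne_top j) hle_j)
  obtain hlt | rfl := (show k ≤ j by exact_mod_cast hk ▸ hle_j).lt_or_eq
  · have hu_k : u ∈ cell rho2 k := hbelow k hlt ▸ hk.symm
    exact absurd (hu.symm.trans hu_k) (by exact_mod_cast hlt.ne')
  · exact hk.symm

theorem LMle_of_PTle (hle : PTle rho1 rho2) : LMle rho1 rho2 := by
  by_cases hall : ∀ n : ℕ, cell rho1 n = cell rho2 n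
  · exact Or.inl fun i => by rw [eq_of_forall_cell_natCast_eq hall]
  · rw [not_forall] at hall
    have hbelow : ∀ k < Nat.find hall, cell rho1 k = cell rho2 k :=
      fun k hk => not_not.mp (Nat.find_min hall hk)
    exact Or.inr ⟨Nat.find hall, hbelow, Nat.find_spec hall, cell_subset_of_PTle hle hbelow⟩

theorem LMle_antisymm (h12 : LMle rho1 rho2) (h21 : LMle rho2 rho1) : rho1 = rho2 := by
  apply eq_of_forall_cell_natCast_eq
  rcases h12 with hall | ⟨j, hbelow, hne, hsub⟩
  · exact fun n => hall n
  rcases h21 with hall | ⟨j', hbelow', hne', hsub'⟩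
  · exact fun n => (hall n).symm
  exfalso
  obtain hlt | rfl | hlt := lt_trichotomy j j'
  · exact hne (hbelow' j hlt).symm
  · exact hne (hsub'.antisymm hsub)
  · exact hne' (hbelow j' hlt).symm

end RankingCells

theorem ptl_PTlt_implies_LMlt_general {P : Type u}
    (R1 R2 : RankedInterp P) :
    PTlt R1.rk R2.rk → LMlt R1.rk R2.rk := by
  rintro ⟨hle, hnle⟩
  refine ⟨LMle_of_PTle hle, fun h21 => hnle ?_⟩
  rw [LMle_antisymm (LMle_of_PTle hle) h21]
  exact fun _ => le_rfl

/-- strict PT preference implies strict LM preference. -/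
theorem ptl_PTlt_implies_LMlt {P : Type u} [Fintype P] [DecidableEq P]
    (R1 R2 : RankedInterp P) :
    PTlt R1.rk R2.rk → LMlt R1.rk R2.rk :=
  ptl_PTlt_implies_LMlt_general R1 R2
end

section
/- For every knowledge base K ⊆ L• and every ranked model R of K such that R ⪯_LM R' for every ranked model R' of K (i.e., R is an LM-minimum of Mod(K)), R belongs to min_PT Mod(K); that is, there is no ranked model R'' of K with R'' ≺_PT R. -/
attribute [local instance] Classical.propDecidable

universe u

/-- `Mod(K)`: the set of ranked models of `K`. -/
def ModSet {P : Type u} (K : Set (PTL P)) : Set (RankedInterp P) :=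
  {R | modelsSet R K}

/-- every LM-minimum ranked model of `K` is PT-minimal. -/
theorem ptl_LM_minimum_in_minPT {P : Type u} [Fintype P] [DecidableEq P]
    (K : Set (PTL P)) (R : RankedInterp P) (hR : R ∈ ModSet K)
    (hmin : ∀ R' ∈ ModSet K, LMle R.rk R'.rk) :
    ¬ ∃ R'' ∈ ModSet K, PTlt R''.rk R.rk := by
  rintro ⟨R'', hR''K, hle, hnle⟩
  rcases hmin R'' hR''K with hall | ⟨j, hbelow, hne, hsub⟩
  · apply hnle
    intro w
    have hw : w ∈ cell R.rk (R.rk w) := rfl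
    rw [hall (R.rk w)] at hw
    exact le_of_eq (show R''.rk w = R.rk w from hw).symm
  · obtain ⟨u, hu, hu'⟩ : ∃ u, u ∈ cell R.rk (j : ℕ∞) ∧ u ∉ cell R''.rk (j : ℕ∞) := by
      by_contra h
      push_neg at h
      exact hne (Set.Subset.antisymm h hsub)
    have huj : R.rk u = (j : ℕ∞) := hu
    have hle' : R''.rk u ≤ (j : ℕ∞) := by rw [← huj]; exact hle u
    have hlt : R''.rk u < (j : ℕ∞) := lt_of_le_of_ne hle' hu'
    obtain ⟨k, hk'⟩ := WithTop.ne_top_iff_exists.mp (ne_top_of_lt hlt)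
    have hk : R''.rk u = (k : ℕ∞) := hk'.symm
    have hkj : k < j := by exact_mod_cast hk ▸ hlt
    have huk : u ∈ cell R''.rk (k : ℕ∞) := hk
    rw [← hbelow k hkj] at huk
    have : (k : ℕ∞) = (j : ℕ∞) := by
      have hk' : R.rk u = (k : ℕ∞) := huk
      rw [← hk', huj]
    exact absurd (by exact_mod_cast this) (Nat.ne_of_lt hkj)
end

section
/- PT-entailment satisfies the following: (i) Inclusion: for every K ⊆ L•, K ⊆ Cn_PT(K); (ii) Cumulativity: for all K, K' ⊆ L•, if K ⊆ K' ⊆ Cn_PT(K), then Cn_PT(K') = Cn_PT(K); (iii) Ampliativeness: for every K ⊆ L•, Cn0(K) ⊆ Cn_PT(K). -/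
attribute [local instance] Classical.propDecidable

universe u

/-- The PT-minimal ranked models of `K`. -/
def minPT {P : Type u} (K : Set (PTL P)) : Set (RankedInterp P) :=
  {R ∈ ModSet K | ¬ ∃ R' ∈ ModSet K, PTlt R'.rk R.rk}

/-- PT-entailment consequences of `K`. -/
def CnPT {P : Type u} (K : Set (PTL P)) : Set (PTL P) :=
  {a | ∀ R ∈ minPT K, R.models a}

/-! Minimal models of `K` are PT-minimal for every `K'` sandwiched between `K` and `Cn_PT(K)`,
since `Mod(K') ⊆ Mod(K)`. The converse needs smoothness: over finitely many atoms the pointwise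
order on ranking functions is well-founded, so every model of `K` lies above a PT-minimal one. -/

lemma PTlt_iff_lt {P : Type u} {rho1 rho2 : Val P → ℕ∞} : PTlt rho1 rho2 ↔ rho1 < rho2 := by
  rw [lt_iff_le_not_ge]
  rfl

lemma ModSet_antitone {P : Type u} {K K' : Set (PTL P)} (h : K ⊆ K') : ModSet K' ⊆ ModSet K :=
  fun _ hR a ha => hR a (h ha)

lemma minPT_subset_ModSet_of_subset_CnPT {P : Type u} {K K' : Set (PTL P)}
    (h : K' ⊆ CnPT K) : minPT K ⊆ ModSet K' :=
  fun R hR _ ha => h ha R hR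

lemma exists_minPT_le {P : Type u} [Finite P] {K : Set (PTL P)} {R : RankedInterp P}
    (hR : R ∈ ModSet K) : ∃ R' ∈ minPT K, PTle R'.rk R.rk := by
  suffices ∀ rho : Val P → ℕ∞, ∀ R ∈ ModSet K, R.rk = rho → ∃ R' ∈ minPT K, R'.rk ≤ rho from
    this R.rk R hR rfl
  intro rho
  induction rho using WellFoundedLT.induction with
  | ind rho ih =>
    rintro R hR rfl
    by_cases hmin : R ∈ minPT K
    · exact ⟨R, hmin, le_rfl⟩
    · obtain ⟨R₂, hR₂, hlt⟩ : ∃ R₂ ∈ ModSet K, PTlt R₂.rk R.rk := by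
        simpa [minPT, hR] using hmin
      obtain ⟨R', hR', hle⟩ := ih R₂.rk (PTlt_iff_lt.1 hlt) R₂ hR₂ rfl
      exact ⟨R', hR', hle.trans (PTlt_iff_lt.1 hlt).le⟩

lemma minPT_eq_of_subset_of_subset_CnPT {P : Type u} [Finite P] {K K' : Set (PTL P)}
    (h₁ : K ⊆ K') (h₂ : K' ⊆ CnPT K) : minPT K' = minPT K := by
  ext R
  constructor
  · rintro ⟨hR, hnot⟩
    refine ⟨ModSet_antitone h₁ hR, fun ⟨R₂, hR₂, hlt⟩ => ?_⟩
    obtain ⟨R', hR', hle⟩ := exists_minPT_le hR₂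
    exact hnot ⟨R', minPT_subset_ModSet_of_subset_CnPT h₂ hR',
      PTlt_iff_lt.2 (lt_of_le_of_lt hle (PTlt_iff_lt.1 hlt))⟩
  · rintro ⟨hR, hnot⟩
    exact ⟨minPT_subset_ModSet_of_subset_CnPT h₂ ⟨hR, hnot⟩,
      fun ⟨R₂, hR₂, hlt⟩ => hnot ⟨R₂, ModSet_antitone h₁ hR₂, hlt⟩⟩

theorem ptl_CnPT_basic_properties_general {P : Type u} [Fintype P] :
    (∀ K : Set (PTL P), K ⊆ CnPT K) ∧
    (∀ K K' : Set (PTL P), K ⊆ K' → K' ⊆ CnPT K → CnPT K' = CnPT K) ∧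
    (∀ K : Set (PTL P), Cn0 K ⊆ CnPT K) := by
  refine ⟨fun K a ha R hR => hR.1 a ha, fun K K' h₁ h₂ => ?_, fun K a ha R hR => ha R hR.1⟩
  simp only [CnPT, minPT_eq_of_subset_of_subset_CnPT h₁ h₂]

/-- PT-entailment satisfies Inclusion, Cumulativity and
Ampliativeness. -/
theorem ptl_CnPT_basic_properties {P : Type u} [Fintype P] [DecidableEq P] :
    (∀ K : Set (PTL P), K ⊆ CnPT K) ∧
    (∀ K K' : Set (PTL P), K ⊆ K' → K' ⊆ CnPT K → CnPT K' = CnPT K) ∧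
    (∀ K : Set (PTL P), Cn0 K ⊆ CnPT K) :=
  ptl_CnPT_basic_properties_general
end

section
/- PT-entailment satisfies Strict Entailment: for every K ⊆ L• and every purely propositional sentence α ∈ L, α ∈ Cn_PT(K) if and only if α ∈ Cn0(K). -/
attribute [local instance] Classical.propDecidable

universe u

/-- Propositional sentences' satisfaction does not depend on the ranking. -/
lemma satR_prop_invariant {P : Type u} (rho rho' : Val P → ℕ∞) (v : Val P) :
    ∀ a : PTL P, PTL.IsProp a → (satR rho v a ↔ satR rho' v a) := by
  intro a
  induction a with
  | atom p => intro _; rfl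
  | neg b ih => intro h; simp only [satR]; exact not_congr (ih h)
  | conj b c ihb ihc =>
      intro h; simp only [satR]; exact and_congr (ihb h.1) (ihc h.2)
  | top => intro _; rfl
  | bot => intro _; rfl
  | typ b _ => intro h; exact absurd h (by simp [PTL.IsProp])

/-- Finite ranks of convex rankings are bounded by the number of valuations. -/
lemma convex_rank_lt {P : Type u} [Fintype P] [DecidableEq P]
    (rho : Val P → ℕ∞) (hc : RkConvex rho) (v : Val P) (hv : rho v ≠ ⊤) :
    rho v < (Fintype.card (Val P) : ℕ∞) := by
  obtain ⟨i, hi⟩ : ∃ i : ℕ, rho v = (i : ℕ∞) := by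
    lift rho v to ℕ using hv with i hi; exact ⟨i, rfl⟩
  have hwit : ∀ j : Fin i, ∃ v', rho v' = (j : ℕ∞) := fun j => hc v i hi j j.2
  choose w hw using hwit
  -- the map sending j : Fin (i+1) to the witness of rank j (with v for rank i) is injective
  let f : Fin (i + 1) → Val P := fun j =>
    if h : (j : ℕ) < i then w ⟨j, h⟩ else v
  have hf : Function.Injective f := by
    intro j k hjk
    have hrk : ∀ j : Fin (i + 1), rho (f j) = ((j : ℕ) : ℕ∞) := by
      intro j
      by_cases h : (j : ℕ) < i
      · simp only [f, dif_pos h, hw]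
      · have : (j : ℕ) = i := Nat.le_antisymm (Nat.lt_succ_iff.mp j.2) (Nat.le_of_not_lt h)
        simp only [f, dif_neg h, hi, this]
    have := (hrk j).symm.trans ((congrArg rho hjk).trans (hrk k))
    exact Fin.ext (by exact_mod_cast this)
  have hcard : i + 1 ≤ Fintype.card (Val P) := by
    simpa using Fintype.card_le_of_injective f hf
  rw [hi]
  exact_mod_cast Nat.lt_of_lt_of_le (Nat.lt_succ_self i) hcard

/-- A natural-number measure on ranked interpretations. -/
noncomputable def rkMeasure {P : Type u} [Fintype P] [DecidableEq P]
    (R : RankedInterp P) : ℕ :=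
  ∑ w : Val P, (min (R.rk w) (Fintype.card (Val P) : ℕ∞)).toNat

lemma rkMeasure_lt {P : Type u} [Fintype P] [DecidableEq P]
    (R1 R2 : RankedInterp P) (h : PTlt R1.rk R2.rk) :
    rkMeasure R1 < rkMeasure R2 := by
  obtain ⟨hle, hnle⟩ := h
  simp only [PTle, not_forall, not_le] at hnle
  obtain ⟨w0, hw0⟩ := hnle
  have hw0' : R1.rk w0 < R2.rk w0 := hw0
  set N : ℕ∞ := (Fintype.card (Val P) : ℕ∞) with hN
  have hNtop : N ≠ ⊤ := by rw [hN]; exact ENat.coe_ne_top _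
  have hmono : ∀ w, (min (R1.rk w) N).toNat ≤ (min (R2.rk w) N).toNat := by
    intro w
    have h1 : min (R1.rk w) N ≤ min (R2.rk w) N := min_le_min (hle w) le_rfl
    exact ENat.toNat_le_toNat h1
      ((lt_of_le_of_lt (min_le_right _ _) (lt_top_iff_ne_top.mpr hNtop)).ne)
  have hstrict : (min (R1.rk w0) N).toNat < (min (R2.rk w0) N).toNat := by
    have h1top : R1.rk w0 ≠ ⊤ := ne_top_of_lt hw0'
    have h1N : R1.rk w0 < N := convex_rank_lt R1.rk R1.convex w0 h1top
    have hlt : min (R1.rk w0) N < min (R2.rk w0) N := by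
      rw [min_eq_left h1N.le]
      exact lt_min hw0' h1N
    have hn : min (R2.rk w0) N ≠ ⊤ :=
      (lt_of_le_of_lt (min_le_right _ _) (lt_top_iff_ne_top.mpr hNtop)).ne
    lift (min (R2.rk w0) N) to ℕ using hn with n2 hn2
    lift (min (R1.rk w0) N) to ℕ using ne_top_of_lt hlt with n1 hn1
    exact_mod_cast hlt
  exact Finset.sum_lt_sum (fun w _ => hmono w) ⟨w0, Finset.mem_univ w0, hstrict⟩

/-- Every ranked model of `K` has a PT-minimal ranked model of `K` below it. -/
lemma exists_min_below {P : Type u} [Fintype P] [DecidableEq P]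
    (K : Set (PTL P)) :
    ∀ n (R : RankedInterp P), rkMeasure R ≤ n → R ∈ ModSet K →
      ∃ R0 ∈ minPT K, PTle R0.rk R.rk := by
  intro n
  induction n with
  | zero =>
      intro R hRn hRK
      by_cases h : ∃ R' ∈ ModSet K, PTlt R'.rk R.rk
      · obtain ⟨R', hR'K, hR'lt⟩ := h
        exact absurd (Nat.lt_of_lt_of_le (rkMeasure_lt R' R hR'lt) hRn)
          (Nat.not_lt_zero _)
      · exact ⟨R, ⟨hRK, h⟩, fun w => le_rfl⟩
  | succ n ih =>
      intro R hRn hRK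
      by_cases h : ∃ R' ∈ ModSet K, PTlt R'.rk R.rk
      · obtain ⟨R', hR'K, hR'lt⟩ := h
        have hm : rkMeasure R' ≤ n :=
          Nat.lt_succ_iff.mp (Nat.lt_of_lt_of_le (rkMeasure_lt R' R hR'lt) hRn)
        obtain ⟨R0, hR0min, hR0le⟩ := ih R' hm hR'K
        exact ⟨R0, hR0min, fun w => le_trans (hR0le w) (hR'lt.1 w)⟩
      · exact ⟨R, ⟨hRK, h⟩, fun w => le_rfl⟩

/-- PT-entailment satisfies Strict Entailment: it coincides with
ranked entailment on purely propositional sentences. -/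
theorem ptl_CnPT_strict_entailment {P : Type u} [Fintype P] [DecidableEq P]
    (K : Set (PTL P)) (a : PTL P) (ha : a.IsProp) :
    a ∈ CnPT K ↔ a ∈ Cn0 K := by
  constructor
  · intro h R hRK v hv
    obtain ⟨R0, hR0min, hR0le⟩ :=
      exists_min_below K (rkMeasure R) R le_rfl hRK
    have hv0 : R0.rk v < ⊤ := lt_of_le_of_lt (hR0le v) hv
    have hsat : satR R0.rk v a := h R0 hR0min v hv0
    exact (satR_prop_invariant R0.rk R.rk v a ha).mp hsat
  · intro h R hRmin
    exact h R hRmin.1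
end

section
/- PT-entailment does not induce a rational conditional: let P = {f, p, r} consist of three distinct atoms and let K = {•⊤ → (¬p ∧ ¬r), •p → •¬f, •r → •f, p → ¬r}. Then •¬p → ¬r ∈ Cn_PT(K), but •¬p → ¬f ∉ Cn_PT(K) and •(¬p ∧ f) → ¬r ∉ Cn_PT(K). Consequently, the induced conditional relation |~_{Cn_PT(K)} violates Rational Monotonicity (RM) and is therefore not a rational conditional. -/
attribute [local instance] Classical.propDecidable

universe u

/-!
In every ranked model of `K` the worlds of rank `0` satisfy `¬p ∧ ¬r`, so the typical `¬p`-worlds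
lie at rank `0` and satisfy `¬r`. Two PT-minimal models refute the other two conditionals. In the
first, the four `¬p ∧ ¬r` worlds form rank `0` and every other world is impossible, so a typical
`¬p`-world may fly. In the second, `¬f ∧ ¬p ∧ ¬r` alone has rank `0`, the flying `¬p`-worlds have
rank `1` and `¬f ∧ ¬p ∧ r` has rank `2`, so a typical `¬p ∧ f`-world may satisfy `r`. Minimality
of both rests on `•p → •¬f` and `•r → •f`: a world of rank `0` satisfying `¬f` (resp. `f`) makes
every `p`-world (resp. `r`-world) impossible, since a typical one would have positive rank.
-/

-- The classical instance made local above would otherwise stop `decide` from evaluating.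
attribute [-instance] Classical.propDecidable

section Semantics

variable {P : Type u} {rho : Val P → ℕ∞} {v w : Val P} {a b : PTL P}

instance decidableSatR [Fintype P] [DecidableEq P] (rho : Val P → ℕ∞) :
    ∀ (v : Val P) (a : PTL P), Decidable (satR rho v a)
  | v, .atom p => inferInstanceAs (Decidable (v p = true))
  | v, .neg a => have := decidableSatR rho v a; inferInstanceAs (Decidable ¬_)
  | v, .conj a b =>
    have := decidableSatR rho v a
    have := decidableSatR rho v b
    inferInstanceAs (Decidable (_ ∧ _))
  | _, .top => inferInstanceAs (Decidable True)
  | _, .bot => inferInstanceAs (Decidable False)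
  | v, .typ a =>
    have := fun v' => decidableSatR rho v' a
    inferInstanceAs (Decidable (_ ∧ ∀ v', rho v' < rho v → ¬satR rho v' a))

instance [Fintype P] [DecidableEq P] (R : RankedInterp P) (a : PTL P) : Decidable (R.models a) :=
  inferInstanceAs (Decidable (∀ v, R.rk v < ⊤ → satR R.rk v a))

theorem satR_impl : satR rho v (a.impl b) ↔ (satR rho v a → satR rho v b) := by
  simp only [PTL.impl, satR]
  tauto

theorem satR_typ_iff :
    satR rho v a.typ ↔ satR rho v a ∧ ∀ v', satR rho v' a → rho v ≤ rho v' := by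
  simp only [satR, ← not_lt]
  exact and_congr_right fun _ => forall_congr' fun _ => imp_not_comm

theorem satR_typ_of_rk_eq_zero (hv : rho v = 0) (ha : satR rho v a) : satR rho v a.typ :=
  satR_typ_iff.2 ⟨ha, fun _ _ => hv ▸ zero_le⟩

theorem exists_satR_typ_le (ha : satR rho v a) : ∃ u, satR rho u a.typ ∧ rho u ≤ rho v := by
  obtain ⟨u, hu, hmin⟩ :=
    (InvImage.wf rho wellFounded_lt).has_min {u | satR rho u a} ⟨v, ha⟩
  exact ⟨u, ⟨hu, fun v' hlt hv' => hmin v' hv' hlt⟩, not_lt.1 (hmin v ha)⟩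

theorem RkConvex.exists_rk_eq_zero (h : RkConvex rho) (hv : rho v ≠ ⊤) : ∃ w, rho w = 0 := by
  obtain ⟨i, hi⟩ := ENat.ne_top_iff_exists.1 hv
  rcases i.eq_zero_or_pos with rfl | hi0
  · exact ⟨v, hi.symm⟩
  · exact h v i hi.symm 0 hi0

theorem RkConvex.of_exists_add_one
    (h : ∀ v, rho v ≠ 0 → rho v ≠ ⊤ → ∃ v', rho v' + 1 = rho v) : RkConvex rho := by
  intro v i hv j hj
  induction i generalizing v with
  | zero => exact absurd hj (Nat.not_lt_zero j)
  | succ i ih =>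
    obtain ⟨v', hv'⟩ := h v (by simp [hv]) (by simp [hv])
    have hv'i : rho v' = i := by
      rw [hv, Nat.cast_succ] at hv'
      exact WithTop.add_right_cancel ENat.one_ne_top hv'
    rcases (Nat.lt_succ_iff.1 hj).eq_or_lt with rfl | hji
    · exact ⟨v', hv'i⟩
    · exact ih v' hv'i hji

theorem rk_eq_zero_of_satR_typ (hconv : RkConvex rho) (h0 : ∀ u, rho u = 0 → satR rho u a)
    (hv : rho v ≠ ⊤) (hva : satR rho v a.typ) : rho v = 0 := by
  obtain ⟨w, hw⟩ := hconv.exists_rk_eq_zero hv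
  exact le_zero_iff.1 (hw ▸ (satR_typ_iff.1 hva).2 w (h0 w hw))

theorem rk_eq_top_of_modelsR_typ_impl_typ (hab : modelsR rho (a.typ.impl b.typ))
    (ha0 : ∀ u, rho u = 0 → ¬satR rho u a) (hw : rho w = 0) (hwb : satR rho w b)
    (hva : satR rho v a) : rho v = ⊤ := by
  by_contra hv
  obtain ⟨u, hu, huv⟩ := exists_satR_typ_le hva
  have hub := satR_impl.1 (hab u (huv.trans_lt (lt_top_iff_ne_top.2 hv))) hu
  have hu0 : rho u ≠ 0 := fun h => ha0 u h (satR_typ_iff.1 hu).1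
  exact hub.2 w (hw ▸ pos_iff_ne_zero.2 hu0) hwb

end Semantics

section Entailment

variable {P : Type u} {K : Set (PTL P)} {a b c : PTL P}

theorem Cn0_subset_CnPT (K : Set (PTL P)) : Cn0 K ⊆ CnPT K :=
  fun _ ha R hR => ha R hR.1

theorem mem_minPT_of_forall_le {R : RankedInterp P} (hR : modelsSet R K)
    (h : ∀ R' : RankedInterp P, modelsSet R' K → PTle R'.rk R.rk → PTle R.rk R'.rk) :
    R ∈ minPT K :=
  ⟨hR, fun ⟨R', hR', hle, hnle⟩ => hnle (h R' hR' hle)⟩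

theorem notMem_CnPT_of_not_satR {R : RankedInterp P} {v : Val P} (hR : R ∈ minPT K)
    (hv : R.rk v < ⊤) (hva : ¬satR R.rk v a) : a ∉ CnPT K :=
  fun h => hva (h R hR v hv)

theorem not_satisfiesRM_inducedCond {S : Set (PTL P)} (ha : a.IsProp) (hb : b.IsProp)
    (hc : c.IsProp) (hac : a.typ.impl c ∈ S) (hab : a.typ.impl b.neg ∉ S)
    (habc : (a.conj b).typ.impl c ∉ S) :
    ¬SatisfiesRM (inducedCond S) :=
  fun hRM => habc (hRM a b c ha hb hc ⟨ha, hc, hac⟩ fun h => hab h.2.2).2.2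

end Entailment

namespace Keg

open PTL

variable {R : RankedInterp (Fin 3)} {v w : Val (Fin 3)}

theorem modelsSet_iff : modelsSet R Keg ↔
    R.models (top.typ.impl (pA.neg.conj rA.neg)) ∧ R.models (pA.typ.impl fA.neg.typ) ∧
      R.models (rA.typ.impl fA.typ) ∧ R.models (pA.impl rA.neg) := by
  simp only [modelsSet, Keg, Set.mem_insert_iff, Set.mem_singleton_iff, forall_eq_or_imp,
    forall_eq]

theorem not_p_and_not_r_of_rk_eq_zero (hR : modelsSet R Keg) (hv : R.rk v = 0) :
    v 1 = false ∧ v 2 = false := by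
  have h := satR_impl.1 ((modelsSet_iff.1 hR).1 v (hv ▸ ENat.top_pos))
    (satR_typ_of_rk_eq_zero hv trivial)
  simpa [satR, pA, rA] using h

theorem typ_not_p_impl_not_r_mem_Cn0 : pA.neg.typ.impl rA.neg ∈ Cn0 Keg := by
  intro R hR v hv
  refine satR_impl.2 fun hvp => ?_
  have h0 := rk_eq_zero_of_satR_typ R.convex
    (fun u hu => by simp [satR, pA, (not_p_and_not_r_of_rk_eq_zero hR hu).1]) hv.ne hvp
  simp [satR, rA, (not_p_and_not_r_of_rk_eq_zero hR h0).2]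

theorem rk_eq_top_of_p (hR : modelsSet R Keg) (hw : R.rk w = 0) (hwf : w 0 = false)
    (hvp : v 1 = true) : R.rk v = ⊤ :=
  rk_eq_top_of_modelsR_typ_impl_typ (modelsSet_iff.1 hR).2.1
    (fun u hu => by simp [satR, pA, (not_p_and_not_r_of_rk_eq_zero hR hu).1]) hw
    (by simp [satR, fA, hwf]) (by simp [satR, pA, hvp])

theorem rk_eq_top_of_r (hR : modelsSet R Keg) (hw : R.rk w = 0) (hwf : w 0 = true)
    (hvr : v 2 = true) : R.rk v = ⊤ :=
  rk_eq_top_of_modelsR_typ_impl_typ (modelsSet_iff.1 hR).2.2.1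
    (fun u hu => by simp [satR, rA, (not_p_and_not_r_of_rk_eq_zero hR hu).2]) hw
    (by simp [satR, fA, hwf]) (by simp [satR, rA, hvr])

/-- A non-flying `r`-world of rank at most `1` would be a typical `r`-world, hence fly. -/
theorem two_le_rk_of_not_f_of_r (hR : modelsSet R Keg) (hvf : v 0 = false) (hvr : v 2 = true) :
    2 ≤ R.rk v := by
  by_contra hlt
  have hv1 : R.rk v ≤ 1 := Order.le_of_lt_add_one (by simpa [one_add_one_eq_two] using hlt)
  have hvtyp : satR R.rk v rA.typ := by
    refine satR_typ_iff.2 ⟨hvr, fun u hu => hv1.trans ?_⟩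
    refine Order.one_le_iff_ne_zero.2 fun hu0 => ?_
    simp [satR, rA, (not_p_and_not_r_of_rk_eq_zero hR hu0).2] at hu
  have hvf' := satR_impl.1 ((modelsSet_iff.1 hR).2.2.1 v (hv1.trans_lt ENat.one_lt_top)) hvtyp
  simp [satR, fA, hvf] at hvf'

-- Valuations are written `![f, p, r]`.
def rkFlat : Val (Fin 3) → ℕ∞ := fun v => if v 1 then ⊤ else if v 2 then ⊤ else 0

def rkLayered : Val (Fin 3) → ℕ∞ := fun v =>
  if v 1 then ⊤ else if v 0 then 1 else if v 2 then 2 else 0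

def flat : RankedInterp (Fin 3) := ⟨rkFlat, RkConvex.of_exists_add_one (by decide)⟩

def layered : RankedInterp (Fin 3) := ⟨rkLayered, RkConvex.of_exists_add_one (by decide)⟩

theorem modelsSet_flat : modelsSet flat Keg := by
  refine modelsSet_iff.2 ⟨?_, ?_, ?_, ?_⟩ <;> decide

theorem modelsSet_layered : modelsSet layered Keg := by
  refine modelsSet_iff.2 ⟨?_, ?_, ?_, ?_⟩ <;> decide

theorem flat_mem_minPT : flat ∈ minPT Keg := by
  refine mem_minPT_of_forall_le modelsSet_flat fun R' hR' hle w => ?_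
  have h000 : R'.rk ![false, false, false] = 0 := le_zero_iff.1 (hle _)
  have h100 : R'.rk ![true, false, false] = 0 := le_zero_iff.1 (hle _)
  change rkFlat w ≤ R'.rk w
  unfold rkFlat
  split_ifs with hp hr
  · rw [rk_eq_top_of_p hR' h000 rfl hp]
  · rw [rk_eq_top_of_r hR' h100 rfl hr]
  · exact zero_le

theorem layered_mem_minPT : layered ∈ minPT Keg := by
  refine mem_minPT_of_forall_le modelsSet_layered fun R' hR' hle w => ?_
  have h000 : R'.rk ![false, false, false] = 0 := le_zero_iff.1 (hle _)
  have hzero_not_f : ∀ u, R'.rk u = 0 → u 0 = false := fun u hu => by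
    by_contra hf
    have h101 := rk_eq_top_of_r hR' hu (Bool.not_eq_false _ ▸ hf) (v := ![true, false, true]) rfl
    exact absurd (hle ![true, false, true]) (by rw [h101]; decide)
  change rkLayered w ≤ R'.rk w
  unfold rkLayered
  split_ifs with hp hf hr
  · rw [rk_eq_top_of_p hR' h000 rfl hp]
  · exact Order.one_le_iff_ne_zero.2 fun h => by simp [hzero_not_f w h] at hf
  · exact two_le_rk_of_not_f_of_r hR' (by simpa using hf) hr
  · exact zero_le

theorem typ_not_p_impl_not_f_notMem_CnPT : pA.neg.typ.impl fA.neg ∉ CnPT Keg :=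
  notMem_CnPT_of_not_satR flat_mem_minPT (v := ![true, false, false]) (by decide) (by decide)

theorem typ_not_p_and_f_impl_not_r_notMem_CnPT : (pA.neg.conj fA).typ.impl rA.neg ∉ CnPT Keg :=
  notMem_CnPT_of_not_satR layered_mem_minPT (v := ![true, false, true]) (by decide) (by decide)

end Keg

/-- for the example knowledge base, `•¬p → ¬r ∈ Cn_PT(K)` but
`•¬p → ¬f ∉ Cn_PT(K)` and `•(¬p ∧ f) → ¬r ∉ Cn_PT(K)`; consequently the
induced conditional violates (RM) and is not a rational conditional. -/
theorem ptl_CnPT_not_rational :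
    PTL.impl (PTL.typ (PTL.neg pA)) (PTL.neg rA) ∈ CnPT Keg ∧
    PTL.impl (PTL.typ (PTL.neg pA)) (PTL.neg fA) ∉ CnPT Keg ∧
    PTL.impl (PTL.typ (PTL.conj (PTL.neg pA) fA)) (PTL.neg rA) ∉ CnPT Keg ∧
    ¬ SatisfiesRM (inducedCond (CnPT Keg)) ∧
    ¬ IsRationalConditional (inducedCond (CnPT Keg)) := by
  have hr := Cn0_subset_CnPT Keg Keg.typ_not_p_impl_not_r_mem_Cn0
  have hf := Keg.typ_not_p_impl_not_f_notMem_CnPT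
  have hfr := Keg.typ_not_p_and_f_impl_not_r_notMem_CnPT
  have hRM : ¬SatisfiesRM (inducedCond (CnPT Keg)) :=
    not_satisfiesRM_inducedCond (a := pA.neg) (b := fA) (c := rA.neg) trivial trivial trivial
      hr hf hfr
  exact ⟨hr, hf, hfr, hRM, fun h => hRM h.2.2.2.2.2.2⟩
end
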